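/- arXiv:1712.00578 — 2 statements merged into one kernel-verified Lean document; each statement's English description precedes it below -/
import Mathlib

section
/- For any real numbers σ and ε with 0 < ε ≤ σ/√2 and σ ≤ 1/2, there exist two Bernoulli-type distributions P and Q on {0, 2σ} such that: (a) the mean of P equals σ − ε and the mean of Q equals σ; (b) the variances of both P and Q are at most σ²; and (c) (ln 2) · KL(Q, P) ≤ ε²/σ², where KL denotes the Kullback–Leibler divergence in bits. -/
/-!
Take `Q` uniform on `{0, 2σ}` and `P` with `P({0}) = (1 + x)/2`, where `x = ε/σ`. In nats,
`KL(Q, P) = ½ log (1/(1+x)) + ½ log (1/(1-x)) = -½ log (1 - x²)`, and `-log (1 - t) ≤ t/(1 - t) ≤ 2t`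
for `0 ≤ t ≤ 1/2`; the hypothesis `ε ≤ σ/√2` is exactly `x² ≤ 1/2`. Any distribution on `{0, 2σ}`
has variance at most `σ²`.
-/

open Real

lemma two_point_variance_le (r s : ℝ) : r * (2 * s) ^ 2 - (r * (2 * s)) ^ 2 ≤ s ^ 2 := by
  nlinarith [sq_nonneg (s * (2 * r - 1))]

lemma neg_log_one_sub_le_div {t : ℝ} (ht : t < 1) : -log (1 - t) ≤ t / (1 - t) := by
  have h := one_sub_inv_le_log_of_pos (sub_pos.mpr ht)
  have h1t : 1 - t ≠ 0 := (sub_pos.mpr ht).ne'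
  rw [show 1 - (1 - t)⁻¹ = -(t / (1 - t)) by field_simp; ring] at h
  linarith

lemma neg_log_one_sub_le_two_mul {t : ℝ} (ht₀ : 0 ≤ t) (ht : t ≤ 1 / 2) :
    -log (1 - t) ≤ 2 * t :=
  calc -log (1 - t) ≤ t / (1 - t) := neg_log_one_sub_le_div (by linarith)
    _ ≤ 2 * t := by rw [div_le_iff₀ (by linarith)]; nlinarith

lemma log_mul_add_logb {b : ℝ} (hb : log b ≠ 0) (a c u v : ℝ) :
    log b * (a * logb b u + c * logb b v) = a * log u + c * log v := by
  simp only [logb]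
  field_simp

lemma klDiv_half_bernoulli {x : ℝ} (hx₀ : -1 < x) (hx₁ : x < 1) :
    1 / 2 * log (1 / 2 / ((1 + x) / 2)) + (1 - 1 / 2) * log ((1 - 1 / 2) / (1 - (1 + x) / 2))
      = -log (1 - x ^ 2) / 2 := by
  have hp : 0 < 1 + x := by linarith
  have hm : 0 < 1 - x := by linarith
  rw [show (1 : ℝ) / 2 / ((1 + x) / 2) = (1 + x)⁻¹ by field_simp,
    show (1 - 1 / 2 : ℝ) / (1 - (1 + x) / 2) = (1 - x)⁻¹ by
      rw [show (1 : ℝ) - (1 + x) / 2 = (1 - x) / 2 by ring]; field_simp; norm_num,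
    log_inv, log_inv, show 1 - x ^ 2 = (1 + x) * (1 - x) by ring, log_mul hp.ne' hm.ne']
  ring

theorem stmt_0_general (σ ε : ℝ) (hε : 0 < ε) (hεσ : ε ≤ σ / Real.sqrt 2) :
    ∃ p q : ℝ,  -- p = P({0}), q = Q({0})
      0 ≤ p ∧ p ≤ 1 ∧ 0 ≤ q ∧ q ≤ 1 ∧
      -- (a) means
      (1 - p) * (2 * σ) = σ - ε ∧
      (1 - q) * (2 * σ) = σ ∧
      -- (b) variances at most σ²
      (1 - p) * (2 * σ) ^ 2 - ((1 - p) * (2 * σ)) ^ 2 ≤ σ ^ 2 ∧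
      (1 - q) * (2 * σ) ^ 2 - ((1 - q) * (2 * σ)) ^ 2 ≤ σ ^ 2 ∧
      -- (c) (ln 2) · KL(Q,P) in bits is at most ε²/σ²
      Real.log 2 * (q * Real.logb 2 (q / p) + (1 - q) * Real.logb 2 ((1 - q) / (1 - p)))
        ≤ ε ^ 2 / σ ^ 2 := by
  have hσ : 0 < σ := by
    have : 0 < σ / √2 := hε.trans_le hεσ
    exact (div_pos_iff_of_pos_right (by positivity)).mp this
  set x := ε / σ with hx
  have hx₀ : 0 < x := div_pos hε hσ
  have hx_sq : x ^ 2 ≤ 1 / 2 := by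
    have h := pow_le_pow_left₀ hε.le hεσ 2
    rw [div_pow, sq_sqrt zero_le_two] at h
    rw [hx, div_pow, div_le_iff₀ (by positivity)]
    linarith
  have hx₁ : x < 1 := by nlinarith
  refine ⟨(1 + x) / 2, 1 / 2, by positivity, by linarith, by norm_num, by norm_num,
    by rw [hx]; field_simp; ring, by ring, two_point_variance_le _ _,
    two_point_variance_le _ _, ?_⟩
  rw [log_mul_add_logb (log_pos one_lt_two).ne', klDiv_half_bernoulli (by linarith) hx₁,
    ← div_pow]
  linarith [neg_log_one_sub_le_two_mul (sq_nonneg x) hx_sq]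

/-- For any reals σ, ε with 0 < ε ≤ σ/√2 and σ ≤ 1/2, there exist
Bernoulli-type distributions P, Q on {0, 2σ} (given by their probabilities of the
value 0) such that P has mean σ − ε, Q has mean σ, both variances are at most σ²,
and (ln 2)·KL(Q,P) ≤ ε²/σ², where KL is in bits. -/
theorem stmt_0 (σ ε : ℝ) (hε : 0 < ε) (hεσ : ε ≤ σ / Real.sqrt 2) (hσ : σ ≤ 1 / 2) :
    ∃ p q : ℝ,  -- p = P({0}), q = Q({0})
      0 ≤ p ∧ p ≤ 1 ∧ 0 ≤ q ∧ q ≤ 1 ∧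
      -- (a) means
      (1 - p) * (2 * σ) = σ - ε ∧
      (1 - q) * (2 * σ) = σ ∧
      -- (b) variances at most σ²
      (1 - p) * (2 * σ) ^ 2 - ((1 - p) * (2 * σ)) ^ 2 ≤ σ ^ 2 ∧
      (1 - q) * (2 * σ) ^ 2 - ((1 - q) * (2 * σ)) ^ 2 ≤ σ ^ 2 ∧
      -- (c) (ln 2) · KL(Q,P) in bits is at most ε²/σ²
      Real.log 2 * (q * Real.logb 2 (q / p) + (1 - q) * Real.logb 2 ((1 - q) / (1 - p)))
        ≤ ε ^ 2 / σ ^ 2 :=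
  stmt_0_general σ ε hε hεσ
end

section
/- For all real x > 0 and all real α ≥ 1, x ≤ x^α + (α − 1)/e. -/
lemma neg_mul_log_le_inv_exp {x : ℝ} (hx : 0 < x) : -(x * Real.log x) ≤ 1 / Real.exp 1 := by
  have he : (0:ℝ) < Real.exp 1 := Real.exp_pos 1
  have h := Real.log_le_sub_one_of_pos (show (0:ℝ) < 1 / (Real.exp 1 * x) by positivity)
  rw [Real.log_div one_ne_zero (by positivity), Real.log_one, Real.log_mul (ne_of_gt he) (ne_of_gt hx), Real.log_exp] at h
  -- h : 0 - (1 + log x) ≤ 1/(e x) - 1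
  have h2 : -Real.log x ≤ 1 / (Real.exp 1 * x) := by linarith
  have h3 : x * -Real.log x ≤ x * (1 / (Real.exp 1 * x)) :=
    mul_le_mul_of_nonneg_left h2 (le_of_lt hx)
  have h4 : x * (1 / (Real.exp 1 * x)) = 1 / Real.exp 1 := by
    field_simp
  rw [h4] at h3
  linarith

/-- For all real x > 0 and α ≥ 1, x ≤ x^α + (α − 1)/e. -/
theorem stmt_5 (x α : ℝ) (hx : 0 < x) (hα : 1 ≤ α) :
    x ≤ x ^ α + (α - 1) / Real.exp 1 := by
  have he : (0:ℝ) < Real.exp 1 := Real.exp_pos 1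
  rcases le_or_gt 1 x with h1 | h1
  · have : x ≤ x ^ α := by
      calc x = x ^ (1:ℝ) := (Real.rpow_one x).symm
      _ ≤ x ^ α := Real.rpow_le_rpow_of_exponent_le h1 hα
    have : (0:ℝ) ≤ (α - 1) / Real.exp 1 := div_nonneg (by linarith) (le_of_lt he)
    linarith
  · -- 0 < x < 1
    have hlog : Real.log x < 0 := Real.log_neg hx h1
    -- x^(α-1) = exp((α-1) log x), and 1 - exp u ≤ -u
    have key : 1 - x ^ (α - 1) ≤ -((α - 1) * Real.log x) := by
      have := Real.add_one_le_exp ((α - 1) * Real.log x)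
      rw [mul_comm, ← Real.rpow_def_of_pos hx] at this
      linarith
    have hxp : (0:ℝ) < x ^ (α-1) := Real.rpow_pos_of_pos hx _
    have h4 : x - x ^ α = x * (1 - x ^ (α - 1)) := by
      have hmul : x * x ^ (α - 1) = x ^ α := by
        rw [← Real.rpow_one_add' hx.le (show (1:ℝ)+(α-1) ≠ 0 by intro h; nlinarith)]
        norm_num
      rw [mul_sub, mul_one, hmul]
    have h5 : x * (1 - x ^ (α - 1)) ≤ (α - 1) * -(x * Real.log x) := by
      have := mul_le_mul_of_nonneg_left key (le_of_lt hx)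
      nlinarith
    have h6 : -(x * Real.log x) ≤ 1 / Real.exp 1 := neg_mul_log_le_inv_exp hx
    have h7 : (α - 1) * -(x * Real.log x) ≤ (α - 1) * (1 / Real.exp 1) :=
      mul_le_mul_of_nonneg_left h6 (by linarith)
    rw [mul_one_div] at h7
    linarith
end
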